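/- There do not exist non-negative integers c_p, a_p, c_comma, a_1, a_2, c_q, a_q1, a_q2, c_r, a_r, c_f, a_f, c_s, a_s such that for all natural numbers x and y the following three strict inequalities hold simultaneously: (i) c_p + a_p*x > c_comma + a_1*c_q + a_1*a_q1*x + a_1*a_q2*y + a_2*c_p + a_2*a_p*y; (ii) c_r + a_r*c_f + a_r*a_f*x > c_comma + a_1*c_s + a_1*a_s*y + a_2*c_r + a_2*a_r*x; (iii) c_comma + a_1*c_s + a_1*a_s*y + a_2*c_r + a_2*a_r*x > c_r + a_r*x. (This is the paper's claim that no linear level mapping and linear norm can prove termination of the meta-program of Example 2.) -/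
import Mathlib


/-- There is no linear level mapping / linear norm (with non-negative integer
coefficients) satisfying the three constraints of Example 2 for all natural
numbers `x` and `y`. -/
theorem no_linear_level_mapping :
    ¬ ∃ (cp ap cc a1 a2 cq aq1 aq2 cr ar cf af cs as : ℕ),
      ∀ x y : ℕ,
        (cp + ap * x >
          cc + a1 * cq + a1 * aq1 * x + a1 * aq2 * y + a2 * cp + a2 * ap * y) ∧
        (cr + ar * cf + ar * af * x >
          cc + a1 * cs + a1 * as * y + a2 * cr + a2 * ar * x) ∧
        (cc + a1 * cs + a1 * as * y + a2 * cr + a2 * ar * x >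
          cr + ar * x) := by
  rintro ⟨cp, ap, cc, a1, a2, cq, aq1, aq2, cr, ar, cf, af, cs, as, h⟩
  -- a2 = 0 from (i) at x = y = 0
  have h00 := (h 0 0).1
  simp only [Nat.mul_zero, Nat.add_zero] at h00
  have ha2 : a2 = 0 := by
    by_contra hne
    have h1 : 1 ≤ a2 := Nat.one_le_iff_ne_zero.mpr hne
    nlinarith
  subst ha2
  -- ar = 0 from (iii) with x large
  have h3 := (h (cc + a1 * cs + 1) 0).2.2
  simp only [Nat.mul_zero, Nat.add_zero, Nat.zero_mul] at h3
  have har : ar = 0 := by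
    by_contra hne
    have h1 : 1 ≤ ar := Nat.one_le_iff_ne_zero.mpr hne
    have := Nat.mul_le_mul_right (cc + a1 * cs + 1) h1
    omega
  subst har
  have h2 := (h 0 0).2.1
  have h3' := (h 0 0).2.2
  simp only [Nat.mul_zero, Nat.add_zero, Nat.zero_mul] at h2 h3'
  omega
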